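/- Let K be a field of characteristic zero and let P* be a height two prime ideal of the polynomial ring K[X, Y, Z]. If the contraction P = P* ∩ K[X, Y] is a prime ideal of height two in K[X, Y], then P* is a set theoretic complete intersection, i.e., P* is the radical of an ideal generated by two polynomials; indeed P* is the extension of P to K[X, Y, Z]. -/

import Mathlib

/-!
`P` is a height-two prime of the two-dimensional ring `K[X,Y]`, hence maximal. Extending a
maximal ideal of a Noetherian ring to its polynomial ring preserves the height, so `P·K[X,Y][Z]`
is a prime of height two inside `P*`, and therefore equals `P*`. Finally a maximal ideal of
`K[X][Y]` has the form `(f(X), g(X,Y))`: its contraction to the Jacobson PID `K[X]` is a maximal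
ideal `(f)`, and modulo `f` it becomes principal in the PID `(K[X]/(f))[Y]`. So `P*`, like `P`,
is generated by two elements.
-/

open Polynomial

/-- The height of an ideal: the infimum of the heights (in the prime spectrum)
of the prime ideals containing it. -/
noncomputable def idealHeight {A : Type*} [CommRing A] (I : Ideal A) : ℕ∞ :=
  ⨅ (P : PrimeSpectrum A) (_ : I ≤ P.asIdeal), Order.height P

/-- An ideal `I` of a commutative ring is a set theoretic complete intersection if there
exist `n` elements, with `n` the height of `I`, such that the radical of `I` equals the
radical of the ideal they generate. -/
def IsSTCI {A : Type*} [CommRing A] (I : Ideal A) : Prop :=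
  ∃ n : ℕ, (n : ℕ∞) = idealHeight I ∧
    ∃ a : Fin n → A, I.radical = (Ideal.span (Set.range a)).radical

lemma idealHeight_eq_height {A : Type*} [CommRing A] (I : Ideal A) : idealHeight I = I.height := by
  rw [Ideal.height_eq_inf_minimalPrimes]
  refine le_antisymm (le_iInf₂ fun J hJ => ?_) (le_iInf₂ fun P hP => ?_)
  · have hJprime := hJ.1.1
    exact (iInf₂_le ⟨J, hJprime⟩ hJ.1.2).trans_eq
      (PrimeSpectrum.height_eq_orderHeight ⟨J, hJprime⟩).symm
  · obtain ⟨J, hJ, hJP⟩ := Ideal.exists_minimalPrimes_le hP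
    exact (iInf₂_le J hJ).trans ((Ideal.height_mono hJP).trans_eq P.height_eq_orderHeight)

namespace Polynomial

lemma exists_eq_map_comap_C_sup_span_singleton {R : Type*} [CommRing R] (P : Ideal R[X])
    (hP : (P.comap C).IsMaximal) : ∃ g, P = (P.comap C).map C ⊔ Ideal.span {g} := by
  by_cases h : P = (P.comap C).map C
  · exact ⟨0, by simpa using h⟩
  · obtain ⟨g, -, hg⟩ := exists_monic_span_sup_map_eq R P hP h
    exact ⟨g, hg⟩

lemma exists_eq_span_pair_of_isMaximal {R : Type*} [CommRing R] [IsPrincipalIdealRing R]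
    [IsJacobsonRing R] (P : Ideal R[X]) [P.IsMaximal] : ∃ f g, P = Ideal.span {C f, g} := by
  obtain ⟨g, hg⟩ :=
    exists_eq_map_comap_C_sup_span_singleton P (isMaximal_comap_C_of_isJacobsonRing P)
  obtain ⟨f, hf⟩ := (IsPrincipalIdealRing.principal (P.comap C)).principal
  refine ⟨f, g, ?_⟩
  rw [hg, hf, Ideal.submodule_span_eq, Ideal.map_span, Set.image_singleton, ← Ideal.span_union,
    Set.singleton_union]

lemma map_C_comap_C_eq_of_height_le {R : Type*} [CommRing R] [IsNoetherianRing R]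
    (P : Ideal R[X]) [P.IsPrime] [(P.comap C).IsMaximal]
    (hP : P.height ≤ (P.comap C).height) : (P.comap C).map C = P :=
  have : ((P.comap C).map C).IsPrime := Ideal.isPrime_map_C_of_isPrime
  Ideal.eq_of_le_of_height_le _ Ideal.map_comap_le (by rwa [height_map_C])

end Polynomial

lemma MvPolynomial.exists_eq_span_pair_of_isMaximal {K : Type*} [Field K]
    (P : Ideal (MvPolynomial (Fin 2) K)) [P.IsMaximal] : ∃ a b, P = Ideal.span {a, b} := by
  let e : MvPolynomial (Fin 2) K ≃+* K[X][X] :=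
    ((finSuccEquiv K 1).trans (Polynomial.mapAlgEquiv (uniqueAlgEquiv K (Fin 1)))).toRingEquiv
  have : (P.map e).IsMaximal := Ideal.map_isMaximal_of_equiv e
  obtain ⟨f, g, hfg⟩ := Polynomial.exists_eq_span_pair_of_isMaximal (P.map e)
  refine ⟨e.symm (Polynomial.C f), e.symm g, ?_⟩
  rw [← Ideal.comap_map_of_bijective e e.bijective (I := P), hfg, ← Ideal.map_symm,
    Ideal.map_span, Set.image_pair]

lemma MvPolynomial.isMaximal_of_height_eq_card {K ι : Type*} [Field K] [Finite ι]
    (P : Ideal (MvPolynomial ι K)) [P.IsPrime] (h : P.height = Nat.card ι) : P.IsMaximal := by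
  have hdim : ringKrullDim (MvPolynomial ι K) = Nat.card ι := by simp
  have : FiniteRingKrullDim (MvPolynomial ι K) := by
    rw [finiteRingKrullDim_iff_ne_bot_and_top, hdim]
    exact ⟨WithBot.natCast_ne_bot _, WithBot.coe_injective.ne (ENat.natCast_ne_top _)⟩
  exact Ideal.isMaximal_of_height_eq_ringKrullDim (by rw [h, hdim]; rfl)

theorem stmt_9_general (K : Type*) [Field K]
    (Pstar : Ideal (Polynomial (MvPolynomial (Fin 2) K))) (hPstar : Pstar.IsPrime)
    (hht : idealHeight Pstar = 2)
    (hht' : idealHeight (Pstar.comap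
      (Polynomial.C : MvPolynomial (Fin 2) K →+* Polynomial (MvPolynomial (Fin 2) K))) = 2) :
    IsSTCI Pstar ∧
      Pstar = (Pstar.comap
        (Polynomial.C : MvPolynomial (Fin 2) K →+* Polynomial (MvPolynomial (Fin 2) K))).map
          (Polynomial.C : MvPolynomial (Fin 2) K →+* Polynomial (MvPolynomial (Fin 2) K)) := by
  rw [idealHeight_eq_height] at hht hht'
  have hP : (Pstar.comap C).IsMaximal :=
    MvPolynomial.isMaximal_of_height_eq_card _ (by rw [hht', Nat.card_fin]; rfl)
  have hext : (Pstar.comap C).map C = Pstar :=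
    map_C_comap_C_eq_of_height_le Pstar (by rw [hht, hht'])
  obtain ⟨a, b, hab⟩ := MvPolynomial.exists_eq_span_pair_of_isMaximal (Pstar.comap C)
  refine ⟨⟨2, by rw [idealHeight_eq_height, hht]; rfl, ![C a, C b], ?_⟩, hext.symm⟩
  rw [Matrix.range_cons_cons_empty, ← hext, hab, Ideal.map_span, Set.image_pair]

/-- Let `K` be a field of characteristic zero and `P*` a height two prime of
`K[X,Y,Z] = (K[X,Y])[Z]`. If its contraction `P` to `K[X,Y]` has height two, then `P*`
is a set theoretic complete intersection; indeed `P*` is the extension of `P`. -/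
theorem stmt_9 (K : Type*) [Field K] [CharZero K]
    (Pstar : Ideal (Polynomial (MvPolynomial (Fin 2) K))) (hPstar : Pstar.IsPrime)
    (hht : idealHeight Pstar = 2)
    (hht' : idealHeight (Pstar.comap
      (Polynomial.C : MvPolynomial (Fin 2) K →+* Polynomial (MvPolynomial (Fin 2) K))) = 2) :
    IsSTCI Pstar ∧
      Pstar = (Pstar.comap
        (Polynomial.C : MvPolynomial (Fin 2) K →+* Polynomial (MvPolynomial (Fin 2) K))).map
          (Polynomial.C : MvPolynomial (Fin 2) K →+* Polynomial (MvPolynomial (Fin 2) K)) :=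
  stmt_9_general K Pstar hPstar hht hht'
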